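/- arXiv:math/0502515 — 5 statements merged into one kernel-verified Lean document; each statement's English description precedes it below -/
import Mathlib

section
/- Let A ≅ (ℝ,+)^l be a commutative connected simply connected real Lie group acting linearly on a finite-dimensional real vector space W that decomposes as a direct sum of weight spaces W_{χ_j}, where each χ_j : a → ℝ is a nonzero linear functional on the Lie algebra a of A and exp(ξ) acts on W_{χ_j} as multiplication by e^{χ_j(ξ)}. If z ∈ W has nonzero component in every W_{χ_j} and 0 lies in the closure of the orbit A·z, then the convex cone C generated by the χ_j satisfies C ∩ (−C) = {0}, i.e., the weights χ_1,…,χ_r lie in an open half-space of a*. -/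
/-- If `z` has nonzero components in every weight space of the
`A ≅ ℝ^l`-module `W = ⊕ W_{χ_j}` (all weights `χ_j` nonzero) and `0` lies in the
closure of the orbit `A·z`, then the convex cone generated by the weights is proper:
`C ∩ (−C) = {0}`, i.e. the weights lie in an open half-space. -/
theorem stmt1
    (a : Type*) [AddCommGroup a] [Module ℝ a]
    (ι : Type*) [Fintype ι]
    (W : ι → Type*) [∀ j, NormedAddCommGroup (W j)] [∀ j, NormedSpace ℝ (W j)]
    (χ : ι → (a →ₗ[ℝ] ℝ)) (hχ : ∀ j, χ j ≠ 0)
    (z : ∀ j, W j) (hz : ∀ j, z j ≠ 0)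
    (h0 : (0 : ∀ j, W j) ∈
      closure {w : ∀ j, W j | ∃ ξ : a, w = fun j => Real.exp (χ j ξ) • z j}) :
    ∀ s t : ι → ℝ, (∀ j, 0 ≤ s j) → (∀ j, 0 ≤ t j) →
      (∑ j, s j • χ j) = -(∑ j, t j • χ j) → (∑ j, s j • χ j) = 0 := by
  intro s t hs ht hst
  by_cases hι : Nonempty ι
  · -- find ξ with χ j ξ < 0 for all j
    have hu : (Finset.univ : Finset ι).Nonempty := Finset.univ_nonempty
    set ε : ℝ := Finset.univ.inf' hu (fun j => ‖z j‖) with hε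
    have hεpos : 0 < ε := by
      rw [hε, Finset.lt_inf'_iff]
      exact fun j _ => norm_pos_iff.mpr (hz j)
    have hεle : ∀ j, ε ≤ ‖z j‖ := fun j =>
      Finset.inf'_le _ (Finset.mem_univ j)
    obtain ⟨w, ⟨ξ, hw⟩, hdist⟩ := Metric.mem_closure_iff.mp h0 ε hεpos
    have hneg : ∀ j, χ j ξ < 0 := by
      intro j
      have h1 : dist ((0 : ∀ j, W j) j) (w j) < ε :=
        lt_of_le_of_lt (dist_le_pi_dist _ _ j) hdist
      rw [hw] at h1
      simp only [Pi.zero_apply, dist_zero_left, norm_smul, Real.norm_eq_abs,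
        abs_of_pos (Real.exp_pos _)] at h1
      have h2 : Real.exp (χ j ξ) * ‖z j‖ < ‖z j‖ :=
        lt_of_lt_of_le h1 (hεle j)
      have h3 : Real.exp (χ j ξ) < 1 := by
        have hzpos : 0 < ‖z j‖ := norm_pos_iff.mpr (hz j)
        nlinarith
      exact Real.exp_lt_one_iff.mp h3
    have hsum : ∑ j, (s j + t j) * χ j ξ = 0 := by
      have := congrArg (fun f : a →ₗ[ℝ] ℝ => f ξ) hst
      simp only [LinearMap.coe_sum, Finset.sum_apply, LinearMap.smul_apply,
        LinearMap.neg_apply, smul_eq_mul] at this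
      have h' : ∑ j, s j * χ j ξ + ∑ j, t j * χ j ξ = 0 := by linarith
      rw [← Finset.sum_add_distrib] at h'
      rw [← h']
      apply Finset.sum_congr rfl
      intro j _
      ring
    have hzero : ∀ j, (s j + t j) * χ j ξ = 0 := by
      have hnonneg : ∀ j ∈ Finset.univ, 0 ≤ -((s j + t j) * χ j ξ) := by
        intro j _
        have : (s j + t j) * χ j ξ ≤ 0 :=
          mul_nonpos_of_nonneg_of_nonpos (by linarith [hs j, ht j]) (hneg j).le
        linarith
      have hsum' : ∑ j, -((s j + t j) * χ j ξ) = 0 := by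
        rw [Finset.sum_neg_distrib, hsum, neg_zero]
      intro j
      have := (Finset.sum_eq_zero_iff_of_nonneg hnonneg).mp hsum' j
        (Finset.mem_univ j)
      linarith
    have hs0 : ∀ j, s j = 0 := by
      intro j
      have h4 : s j + t j = 0 := by
        rcases mul_eq_zero.mp (hzero j) with h | h
        · exact h
        · exact absurd h (hneg j).ne
      linarith [hs j, ht j]
    exact Finset.sum_eq_zero fun j _ => by rw [hs0 j, zero_smul]
  · have : IsEmpty ι := not_nonempty_iff.mp hι
    simp
end

section
/- Let A ≅ ℝ^l act linearly and diagonalizably (over ℝ, with positive weights e^{χ_j(ξ)}) on a finite-dimensional real vector space W. If z ∈ W satisfies 0 ∈ closure(A·z), then there exists a one-parameter subgroup τ : ℝ → A such that lim_{t → −∞} τ(t)·z = 0. -/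
/-- If `A ≅ ℝ^l` acts diagonalizably with positive weights `e^{χ_j(ξ)}`
on `W = ⊕ W_{χ_j}` and `0 ∈ closure(A·z)`, then there is a one-parameter subgroup
`τ(t) = exp(tξ)` with `lim_{t → −∞} τ(t)·z = 0`. -/
theorem stmt2
    (a : Type*) [AddCommGroup a] [Module ℝ a]
    (ι : Type*) [Fintype ι]
    (W : ι → Type*) [∀ j, NormedAddCommGroup (W j)] [∀ j, NormedSpace ℝ (W j)]
    (χ : ι → (a →ₗ[ℝ] ℝ))
    (z : ∀ j, W j)
    (h0 : (0 : ∀ j, W j) ∈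
      closure {w : ∀ j, W j | ∃ ξ : a, w = fun j => Real.exp (χ j ξ) • z j}) :
    ∃ ξ : a, Filter.Tendsto (fun t : ℝ => fun j => Real.exp (t * χ j ξ) • z j)
      Filter.atBot (nhds (0 : ∀ j, W j)) := by
  classical
  by_cases hz : ∀ j, z j = 0
  · refine ⟨0, ?_⟩
    have : (fun t : ℝ => fun j => Real.exp (t * χ j 0) • z j)
        = fun _ : ℝ => (0 : ∀ j, W j) := by
      funext t j; simp [hz j]
    rw [this]
    exact tendsto_const_nhds
  · push_neg at hz
    set F : Finset ι := Finset.univ.filter (fun j => z j ≠ 0) with hF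
    have hFne : F.Nonempty := by
      obtain ⟨j, hj⟩ := hz
      exact ⟨j, by simp [hF, hj]⟩
    set ε : ℝ := F.inf' hFne (fun j => ‖z j‖) with hε
    have hεpos : 0 < ε := by
      rw [hε, Finset.lt_inf'_iff]
      intro j hj
      have : z j ≠ 0 := by simpa [hF] using hj
      exact norm_pos_iff.mpr this
    obtain ⟨w, hw, hdist⟩ := Metric.mem_closure_iff.mp h0 ε hεpos
    obtain ⟨ξ, rfl⟩ := hw
    refine ⟨-ξ, ?_⟩
    rw [tendsto_pi_nhds]
    intro j
    by_cases hj : z j = 0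
    · have : (fun t : ℝ => Real.exp (t * χ j (-ξ)) • z j) = fun _ => (0 : W j) := by
        funext t; rw [hj, smul_zero]
      rw [this]; exact tendsto_const_nhds
    · have hχ : χ j ξ < 0 := by
        have h1 : ‖Real.exp (χ j ξ) • z j‖ < ε := by
          calc ‖Real.exp (χ j ξ) • z j‖
              ≤ ‖fun j => Real.exp (χ j ξ) • z j‖ :=
                norm_le_pi_norm (fun j => Real.exp (χ j ξ) • z j) j
            _ < ε := by rwa [dist_zero_left] at hdist
        have h2 : ε ≤ ‖z j‖ := Finset.inf'_le _ (by simp [hF, hj])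
        have h3 : Real.exp (χ j ξ) * ‖z j‖ < ‖z j‖ := by
          calc Real.exp (χ j ξ) * ‖z j‖ = ‖Real.exp (χ j ξ) • z j‖ := by
                rw [norm_smul, Real.norm_eq_abs, abs_of_pos (Real.exp_pos _)]
            _ < ε := h1
            _ ≤ ‖z j‖ := h2
        have hzpos : 0 < ‖z j‖ := norm_pos_iff.mpr hj
        have : Real.exp (χ j ξ) < 1 := by
          by_contra h
          push_neg at h
          nlinarith
        rwa [← Real.exp_lt_one_iff] 
      have hc : 0 < χ j (-ξ) := by
        rw [map_neg]; linarith
      have ht : Filter.Tendsto (fun t : ℝ => t * χ j (-ξ)) Filter.atBot Filter.atBot :=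
        Filter.tendsto_id.atBot_mul_const hc
      have he : Filter.Tendsto (fun t : ℝ => Real.exp (t * χ j (-ξ)))
          Filter.atBot (nhds 0) := Real.tendsto_exp_atBot.comp ht
      have := he.smul_const (z j)
      simpa using this
end

section
/- Let A ≅ ℝ^l act linearly on a finite-dimensional real vector space W as a direct sum of one-dimensional real weight spaces with weights χ_j. Then the set S_A({0}) = { z ∈ W : 0 ∈ closure(A·z) } is a finite union of linear subspaces of W. -/
open Filter Topology

/-! 0 lies in the closure of the orbit of `z` exactly when a single `ξ` makes every weight
`χ j` with `z j ≠ 0` negative: such a `ξ` gives `exp (χ j (t • ξ)) • z j → 0` as `t → ∞`, and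
conversely an orbit point inside the neighbourhood `{w | ‖w j‖ < ‖z j‖ for z j ≠ 0}` of 0 produces
one. This condition only depends on the support of `z`, so the saturation is the union, over the
finitely many supports `J` admitting such a `ξ`, of the coordinate subspaces supported on `J`. -/

theorem zero_mem_closure_exp_weight_orbit_iff {a ι : Type*} [AddCommGroup a] [Module ℝ a]
    [Fintype ι] {W : ι → Type*} [∀ j, NormedAddCommGroup (W j)] [∀ j, NormedSpace ℝ (W j)]
    (χ : ι → a →ₗ[ℝ] ℝ) (z : ∀ j, W j) :
    (0 : ∀ j, W j) ∈ closure {w | ∃ ξ : a, w = fun j => Real.exp (χ j ξ) • z j} ↔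
      ∃ ξ : a, ∀ j, z j ≠ 0 → χ j ξ < 0 := by
  constructor
  · intro hz
    classical
    set s := Finset.univ.filter fun j => z j ≠ 0
    have hU : IsOpen {w : ∀ j, W j | ∀ j ∈ s, ‖w j‖ < ‖z j‖} := by
      simp only [Set.ofPred_forall]
      exact isOpen_biInter_finset fun j _ => isOpen_lt (by fun_prop) continuous_const
    obtain ⟨_, hw, ξ, rfl⟩ := mem_closure_iff.1 hz _ hU fun j hj => by simpa [s] using hj
    refine ⟨ξ, fun j hj => ?_⟩
    have hzj : 0 < ‖z j‖ := norm_pos_iff.2 hj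
    have := hw j (by simpa [s] using hj)
    rw [norm_smul, Real.norm_of_nonneg (Real.exp_nonneg _), mul_lt_iff_lt_one_left hzj] at this
    exact Real.exp_lt_one_iff.1 this
  · rintro ⟨ξ, hξ⟩
    have hflow : Tendsto (fun t : ℝ => fun j => Real.exp (χ j (t • ξ)) • z j) atTop (𝓝 0) := by
      refine tendsto_pi_nhds.2 fun j => ?_
      by_cases hj : z j = 0
      · simp [hj]
      have hexp : Tendsto (fun t : ℝ => Real.exp (t * χ j ξ)) atTop (𝓝 0) :=
        Real.tendsto_exp_atBot.comp (tendsto_id.atTop_mul_const_of_neg (hξ j hj))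
      simpa using hexp.smul_const (z j)
    exact mem_closure_of_tendsto hflow (Eventually.of_forall fun t => ⟨t • ξ, rfl⟩)

theorem setOf_exists_neg_on_support_eq_iUnion {a ι : Type*} [AddCommGroup a] [Module ℝ a]
    [Fintype ι] {W : ι → Type*} [∀ j, AddCommGroup (W j)] [∀ j, Module ℝ (W j)]
    (χ : ι → a →ₗ[ℝ] ℝ) :
    {z : ∀ j, W j | ∃ ξ : a, ∀ j, z j ≠ 0 → χ j ξ < 0} =
      ⋃ J : {J : Finset ι // ∃ ξ : a, ∀ j ∈ J, χ j ξ < 0},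
        (Submodule.pi (↑J.1 : Set ι)ᶜ fun _ => ⊥ : Submodule ℝ (∀ j, W j)) := by
  classical
  ext z
  simp only [Set.mem_ofPred_eq, Set.mem_iUnion, SetLike.mem_coe, Submodule.mem_pi,
    Submodule.mem_bot, Set.mem_compl_iff, Subtype.exists, exists_prop]
  constructor
  · rintro ⟨ξ, hξ⟩
    exact ⟨Finset.univ.filter fun j => z j ≠ 0, ⟨ξ, by simpa using hξ⟩, by simp⟩
  · rintro ⟨J, ⟨ξ, hξ⟩, hz⟩
    exact ⟨ξ, fun j hj => hξ j (by_contra fun hJ => hj (hz j hJ))⟩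

/-- For a diagonal linear action of `A ≅ ℝ^l` on `W = ⊕ W_{χ_j}`,
the saturation `S_A({0}) = { z : 0 ∈ closure(A·z) }` is a finite union of
linear subspaces of `W`. -/
theorem stmt3
    (a : Type*) [AddCommGroup a] [Module ℝ a]
    (ι : Type*) [Fintype ι]
    (W : ι → Type*) [∀ j, NormedAddCommGroup (W j)] [∀ j, NormedSpace ℝ (W j)]
    (χ : ι → (a →ₗ[ℝ] ℝ)) :
    ∃ (n : ℕ) (V : Fin n → Submodule ℝ (∀ j, W j)),
      {z : ∀ j, W j | (0 : ∀ j, W j) ∈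
        closure {w : ∀ j, W j | ∃ ξ : a, w = fun j => Real.exp (χ j ξ) • z j}} =
      ⋃ i, (V i : Set (∀ j, W j)) := by
  classical
  let e := Fintype.equivFin {J : Finset ι // ∃ ξ : a, ∀ j ∈ J, χ j ξ < 0}
  refine ⟨_, fun i => Submodule.pi (↑(e.symm i).1 : Set ι)ᶜ fun _ => ⊥, ?_⟩
  simp only [zero_mem_closure_exp_weight_orbit_iff, setOf_exists_neg_on_support_eq_iUnion]
  exact (e.symm.surjective.iUnion_comp _).symm
end

section
/- Let G = K·A·K be a group acting on a topological space Z, where K is a subgroup and A ⊂ G. Let Ω ⊂ Ω₁ ⊂ Ω₂ ⊂ Z with Ω, Ω₂ open and K-invariant, and Ω₁ open and orbit convex with respect to A (for each z ∈ Ω₁ and each one-parameter subgroup t ↦ exp(tξ) ∈ A, the set {t : exp(tξ)·z ∈ Ω₁} is an interval). Let X be a topological G-space and φ : Ω₂ → X a continuous K-equivariant map that is locally G-equivariant. Then there is a unique continuous G-equivariant map Φ : G·Ω → X with Φ|Ω = φ. -/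
/-- Extension of locally G-equivariant maps. Let `G = K·A·K` act on `Z`,
with `A = exp(V)` the image of a one-parameter-subgroup map, `Ω ⊆ Ω₁ ⊆ Ω₂` with
`Ω, Ω₂` open `K`-invariant and `Ω₁` orbit convex with respect to `A`. If
`φ : Ω₂ → X` is continuous, `K`-equivariant and locally `G`-equivariant, then there is
a unique continuous `G`-equivariant extension `Φ` of `φ` to `G·Ω`. -/
theorem stmt9
    (G : Type*) [Group G]
    (Z : Type*) [TopologicalSpace Z] [MulAction G Z]
    (X : Type*) [TopologicalSpace X] [MulAction G X]
    (hZc : ∀ g : G, Continuous (fun z : Z => g • z))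
    (hXc : ∀ g : G, Continuous (fun x : X => g • x))
    (K : Subgroup G)
    (V : Type*) [NormedAddCommGroup V] [NormedSpace ℝ V]
    (exp : V → G)
    (hexp : ∀ (ξ : V) (s t : ℝ), exp ((s + t) • ξ) = exp (s • ξ) * exp (t • ξ))
    (hKAK : ∀ g : G, ∃ k₁ ∈ K, ∃ ξ : V, ∃ k₂ ∈ K, g = k₁ * exp ξ * k₂)
    (Ω Ω₁ Ω₂ : Set Z)
    (hΩΩ₁ : Ω ⊆ Ω₁) (hΩ₁Ω₂ : Ω₁ ⊆ Ω₂)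
    (hΩo : IsOpen Ω) (hΩ₁o : IsOpen Ω₁) (hΩ₂o : IsOpen Ω₂)
    (hΩK : ∀ k ∈ K, ∀ z ∈ Ω, k • z ∈ Ω)
    (hΩ₂K : ∀ k ∈ K, ∀ z ∈ Ω₂, k • z ∈ Ω₂)
    (hoc : ∀ z ∈ Ω₁, ∀ ξ : V, Set.OrdConnected {t : ℝ | exp (t • ξ) • z ∈ Ω₁})
    (φ : Z → X)
    (hφc : ContinuousOn φ Ω₂)
    (hφK : ∀ k ∈ K, ∀ z ∈ Ω₂, φ (k • z) = k • φ z)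
    (hφloc : ∀ z ∈ Ω₂, ∃ ε > 0, ∀ ξ : V, ‖ξ‖ < ε →
      exp ξ • z ∈ Ω₂ ∧ φ (exp ξ • z) = exp ξ • φ z) :
    ∃ Φ : Z → X,
      (∀ z ∈ Ω, Φ z = φ z) ∧
      ContinuousOn Φ {x : Z | ∃ g : G, ∃ z ∈ Ω, x = g • z} ∧
      (∀ g : G, ∀ x ∈ {x : Z | ∃ g' : G, ∃ z ∈ Ω, x = g' • z}, Φ (g • x) = g • Φ x) ∧
      ∀ Φ' : Z → X,
        ((∀ z ∈ Ω, Φ' z = φ z) ∧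
          (∀ g : G, ∀ x ∈ {x : Z | ∃ g' : G, ∃ z ∈ Ω, x = g' • z}, Φ' (g • x) = g • Φ' x)) →
        Set.EqOn Φ Φ' {x : Z | ∃ g : G, ∃ z ∈ Ω, x = g • z} := by
  classical
  have hexp0 : exp 0 = 1 := by
    have h := hexp 0 0 0
    simp only [add_zero, zero_smul] at h
    exact (left_eq_mul.mp h)
  -- segment equivariance lemma
  have seg : ∀ w ∈ Ω₁, ∀ ξ : V, (∀ t ∈ Set.Icc (0:ℝ) 1, exp (t • ξ) • w ∈ Ω₁) →
      φ (exp ξ • w) = exp ξ • φ w := by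
    intro w hw ξ hsegm
    set P : ℝ → Prop := fun t => φ (exp (t • ξ) • w) = exp (t • ξ) • φ w with hPdef
    have hP0 : P 0 := by simp [P, hexp0]
    have hloc : ∀ t ∈ Set.Icc (0:ℝ) 1, ∃ δ > (0:ℝ), ∀ s ∈ Set.Icc (0:ℝ) 1,
        |s - t| < δ → (P s ↔ P t) := by
      intro t ht
      have hzt : exp (t • ξ) • w ∈ Ω₂ := hΩ₁Ω₂ (hsegm t ht)
      obtain ⟨ε, hε, hl⟩ := hφloc _ hzt
      refine ⟨ε / (‖ξ‖ + 1), by positivity, ?_⟩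
      intro s hs hst
      have hnorm : ‖(s - t) • ξ‖ < ε := by
        rw [norm_smul, Real.norm_eq_abs]
        have hp : (0:ℝ) < ‖ξ‖ + 1 := by positivity
        have h2 : ε / (‖ξ‖ + 1) * (‖ξ‖ + 1) = ε := by field_simp
        nlinarith [abs_nonneg (s - t), norm_nonneg ξ]
      have keyeq := (hl _ hnorm).2
      have hsplit : exp (s • ξ) = exp ((s - t) • ξ) * exp (t • ξ) := by
        rw [← hexp]; ring_nf
      have h1 : exp (s • ξ) • w = exp ((s - t) • ξ) • (exp (t • ξ) • w) := by
        rw [hsplit, mul_smul]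
      have h2 : exp (s • ξ) • φ w = exp ((s - t) • ξ) • (exp (t • ξ) • φ w) := by
        rw [hsplit, mul_smul]
      constructor
      · intro hPs
        have h3 := keyeq
        rw [← h1, hPs, h2] at h3
        exact (smul_left_cancel _ h3).symm
      · intro hPt
        show φ (exp (s • ξ) • w) = exp (s • ξ) • φ w
        rw [h1, keyeq, hPt, ← h2]
    -- connectedness argument on Icc 0 1
    have hP1 : P 1 := by
      by_contra hP1
      choose δ hδpos hδ using hloc
      set U : Set ℝ := ⋃ (t : ℝ) (ht : t ∈ Set.Icc (0:ℝ) 1 ∧ P t),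
        Metric.ball t (δ t ht.1) with hU
      set W : Set ℝ := ⋃ (t : ℝ) (ht : t ∈ Set.Icc (0:ℝ) 1 ∧ ¬ P t),
        Metric.ball t (δ t ht.1) with hW
      have hUo : IsOpen U := isOpen_iUnion fun t => isOpen_iUnion fun ht => Metric.isOpen_ball
      have hWo : IsOpen W := isOpen_iUnion fun t => isOpen_iUnion fun ht => Metric.isOpen_ball
      have hcov : Set.Icc (0:ℝ) 1 ⊆ U ∪ W := by
        intro t ht
        by_cases hPt : P t
        · exact Or.inl (Set.mem_iUnion.mpr ⟨t, Set.mem_iUnion.mpr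
            ⟨⟨ht, hPt⟩, Metric.mem_ball_self (hδpos t ht)⟩⟩)
        · exact Or.inr (Set.mem_iUnion.mpr ⟨t, Set.mem_iUnion.mpr
            ⟨⟨ht, hPt⟩, Metric.mem_ball_self (hδpos t ht)⟩⟩)
      have hUne : (Set.Icc (0:ℝ) 1 ∩ U).Nonempty := by
        refine ⟨0, ⟨Set.left_mem_Icc.mpr zero_le_one, ?_⟩⟩
        exact Set.mem_iUnion.mpr ⟨0, Set.mem_iUnion.mpr
          ⟨⟨Set.left_mem_Icc.mpr zero_le_one, hP0⟩,
            Metric.mem_ball_self (hδpos 0 (Set.left_mem_Icc.mpr zero_le_one))⟩⟩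
      have hWne : (Set.Icc (0:ℝ) 1 ∩ W).Nonempty := by
        refine ⟨1, ⟨Set.right_mem_Icc.mpr zero_le_one, ?_⟩⟩
        exact Set.mem_iUnion.mpr ⟨1, Set.mem_iUnion.mpr
          ⟨⟨Set.right_mem_Icc.mpr zero_le_one, hP1⟩,
            Metric.mem_ball_self (hδpos 1 (Set.right_mem_Icc.mpr zero_le_one))⟩⟩
      obtain ⟨x, hxI, hxU, hxW⟩ := isPreconnected_Icc U W hUo hWo hcov hUne hWne
      obtain ⟨t, ht⟩ := Set.mem_iUnion.mp hxU
      obtain ⟨htm, hxball⟩ := Set.mem_iUnion.mp ht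
      obtain ⟨t', ht'⟩ := Set.mem_iUnion.mp hxW
      obtain ⟨htm', hxball'⟩ := Set.mem_iUnion.mp ht'
      have hPx : P x := (hδ t htm.1 x hxI (by
        rw [← Real.dist_eq]; exact hxball)).mpr htm.2
      have hPx' : ¬ P x := fun h => htm'.2 ((hδ t' htm'.1 x hxI (by
        rw [← Real.dist_eq]; exact hxball')).mp h)
      exact hPx' hPx
    have := hP1
    rw [hPdef] at this
    simpa using this
  -- well-definedness (core form)
  have key : ∀ h : G, ∀ z ∈ Ω, ∀ z' ∈ Ω, h • z = z' → φ z' = h • φ z := by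
    intro h z hz z' hz' hhz
    obtain ⟨k₁, hk₁, ξ, k₂, hk₂, rfl⟩ := hKAK h
    have hw : k₂ • z ∈ Ω := hΩK k₂ hk₂ z hz
    have hz'' : k₁⁻¹ • z' ∈ Ω := hΩK k₁⁻¹ (K.inv_mem hk₁) z' hz'
    have hexpw : exp ξ • (k₂ • z) = k₁⁻¹ • z' := by
      rw [← hhz, mul_smul, mul_smul, inv_smul_smul]
    have hseg : ∀ t ∈ Set.Icc (0:ℝ) 1, exp (t • ξ) • (k₂ • z) ∈ Ω₁ := by
      intro t ht
      have h01 := hoc (k₂ • z) (hΩΩ₁ hw) ξ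
      have h0 : (0:ℝ) ∈ {t : ℝ | exp (t • ξ) • (k₂ • z) ∈ Ω₁} := by
        simp [hexp0, hΩΩ₁ hw]
      have h1 : (1:ℝ) ∈ {t : ℝ | exp (t • ξ) • (k₂ • z) ∈ Ω₁} := by
        simp only [Set.mem_setOf_eq, one_smul, hexpw]
        exact hΩΩ₁ hz''
      exact h01.out h0 h1 ht
    have hseq := seg (k₂ • z) (hΩΩ₁ hw) ξ hseg
    have hz'eq : z' = k₁ • (exp ξ • (k₂ • z)) := by
      rw [hexpw, smul_inv_smul]
    have hmem2 : exp ξ • (k₂ • z) ∈ Ω₂ := by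
      rw [hexpw]; exact hΩ₁Ω₂ (hΩΩ₁ hz'')
    rw [hz'eq, hφK k₁ hk₁ _ hmem2, hseq,
      hφK k₂ hk₂ z (hΩ₁Ω₂ (hΩΩ₁ hz)), mul_smul, mul_smul]
  have wd : ∀ g g' : G, ∀ z ∈ Ω, ∀ z' ∈ Ω, g • z = g' • z' → g • φ z = g' • φ z' := by
    intro g g' z hz z' hz' heq
    have h1 : (g'⁻¹ * g) • z = z' := by
      rw [mul_smul, heq, inv_smul_smul]
    have h2 := key _ z hz z' hz' h1
    rw [h2, mul_smul, smul_inv_smul]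
  -- definition of Φ
  let Φ : Z → X := fun x => if h : ∃ g : G, ∃ z ∈ Ω, x = g • z then
      h.choose • φ h.choose_spec.choose else φ x
  have hΦ : ∀ (x : Z) (g : G) (z : Z), z ∈ Ω → x = g • z → Φ x = g • φ z := by
    intro x g z hz hx
    have hex : ∃ g : G, ∃ z ∈ Ω, x = g • z := ⟨g, z, hz, hx⟩
    show (if h : ∃ g : G, ∃ z ∈ Ω, x = g • z then
      h.choose • φ h.choose_spec.choose else φ x) = g • φ z
    rw [dif_pos hex]
    obtain ⟨hz₀, hx₀⟩ := hex.choose_spec.choose_spec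
    exact wd _ g _ hz₀ z hz (hx₀.symm.trans hx)
  refine ⟨Φ, ?_, ?_, ?_, ?_⟩
  · intro z hz
    have := hΦ z 1 z hz (by simp)
    simpa using this
  · -- continuity
    intro x hx
    obtain ⟨g, z, hz, rfl⟩ := hx
    apply ContinuousAt.continuousWithinAt
    have hopen : IsOpen ((fun y : Z => g⁻¹ • y) ⁻¹' Ω) := hΩo.preimage (hZc g⁻¹)
    have hmem : g • z ∈ (fun y : Z => g⁻¹ • y) ⁻¹' Ω := by
      simp only [Set.mem_preimage, inv_smul_smul]; exact hz
    have hψ : ContinuousAt (fun y : Z => g • φ (g⁻¹ • y)) (g • z) := by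
      have h1 : ContinuousAt (fun y : Z => g⁻¹ • y) (g • z) := (hZc g⁻¹).continuousAt
      have h2 : ContinuousAt φ (g⁻¹ • (g • z)) := by
        apply hφc.continuousAt
        apply hΩ₂o.mem_nhds
        rw [inv_smul_smul]
        exact hΩ₁Ω₂ (hΩΩ₁ hz)
      exact ((hXc g).continuousAt).comp (h2.comp h1)
    apply hψ.congr
    apply Filter.eventuallyEq_of_mem (hopen.mem_nhds hmem)
    intro y hy
    exact (hΦ y g (g⁻¹ • y) hy (by simp)).symm
  · -- equivariance
    intro g x hx
    obtain ⟨g', z, hz, rfl⟩ := hx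
    have h1 : Φ (g • g' • z) = (g * g') • φ z := hΦ _ (g * g') z hz (by rw [mul_smul])
    have h2 : Φ (g' • z) = g' • φ z := hΦ _ g' z hz rfl
    rw [h1, h2, mul_smul]
  · -- uniqueness
    rintro Φ' ⟨hΦ'Ω, hΦ'eq⟩ x ⟨g, z, hz, rfl⟩
    have h1 : Φ' (g • z) = g • Φ' z := hΦ'eq g z ⟨1, z, hz, (one_smul _ _).symm⟩
    have h2 : Φ (g • z) = g • φ z := hΦ _ g z hz rfl
    rw [h2, h1, hΦ'Ω z hz]
end

section
/- In the setting U = U(n,ℂ), for ξ, η Hermitian matrices in i𝔲(n,ℂ) identified via the trace form B(X,Y) = tr(iX·iY) on 𝔲(n,ℂ), let β(t) = exp(−itξ)·exp(2iη)·exp(−itξ) (matrix exponentials). Then for ξ, η in a neighborhood of 0 where log β(t) is defined by the power series, (d/dt)|_{t=0} [ −(1/8) tr( (log β(t))² ) ] = B(ξ,η). Equivalently, the moment map of the right U-action on U^ℂ associated with ρ(u exp(iη)) = (1/2)B(η,η) satisfies μ^ξ(u·exp(iη)) = B(ξ,η). -/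
/-!
Put `A = 2iη = L 0` and `D = L'(0)`. The general fact behind the computation is that for a
functional `φ` with `φ (A * Y) = φ (Y * A)` one has `φ (d exp_A D) = φ (exp A * D)`, although
`d exp_A` itself is not `exp A * ·`. Differentiating `exp (L t) = β t` at `0` and applying it to
`φ = tr (η * ·)` gives `tr (η D) = tr (η β'(0) β(0)⁻¹) = 2 tr (η (-iξ))`. Hence
`d/dt tr (L t)² = 2 tr (A D) = 4i tr (η D) = 8 tr (η ξ)`, and `-(1/8)` of it is `tr (iξ iη)`.
-/

open NormedSpace Filter Topology

section TraceCentralizer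

variable {𝕂 𝔸 : Type*} [RCLike 𝕂] [NormedRing 𝔸] [NormedAlgebra 𝕂 𝔸]

def traceCentralizer (φ : 𝔸 →L[𝕂] 𝕂) : Subalgebra 𝕂 𝔸 where
  carrier := {X | ∀ Y, φ (X * Y) = φ (Y * X)}
  mul_mem' {X X'} hX hX' Y := by rw [mul_assoc, hX, mul_assoc, hX', mul_assoc]
  add_mem' {X X'} hX hX' Y := by rw [add_mul, mul_add, map_add, map_add, hX, hX']
  algebraMap_mem' c Y := by rw [Algebra.commutes]

theorem mem_traceCentralizer {φ : 𝔸 →L[𝕂] 𝕂} {X : 𝔸} :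
    X ∈ traceCentralizer φ ↔ ∀ Y, φ (X * Y) = φ (Y * X) :=
  Iff.rfl

theorem isClosed_traceCentralizer (φ : 𝔸 →L[𝕂] 𝕂) :
    IsClosed (traceCentralizer φ : Set 𝔸) := by
  simp only [traceCentralizer, Subalgebra.coe_mk, Set.ofPred_forall]
  exact isClosed_iInter fun Y => isClosed_eq (by fun_prop) (by fun_prop)

theorem map_pow_mul_mul_pow_eq {φ : 𝔸 →L[𝕂] 𝕂} {e : 𝔸} (he : e ∈ traceCentralizer φ)
    (Y : 𝔸) (i j : ℕ) : φ (e ^ i * Y * e ^ j) = φ (e ^ (i + j) * Y) := by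
  rw [← mem_traceCentralizer.mp (pow_mem he j), ← mul_assoc, ← pow_add, add_comm]

theorem exp_mem_traceCentralizer {φ : 𝔸 →L[𝕂] 𝕂} {A : 𝔸} (hA : A ∈ traceCentralizer φ) :
    exp A ∈ traceCentralizer φ :=
  let := NormedAlgebra.restrictScalars ℚ 𝕂 𝔸
  exp_mem (isClosed_traceCentralizer φ) hA

variable [CompleteSpace 𝔸]

theorem exp_inv_natCast_smul_pow {N : ℕ} (hN : N ≠ 0) (X : 𝔸) :
    exp ((N : 𝕂)⁻¹ • X) ^ N = exp X := by
  let := NormedAlgebra.restrictScalars ℚ 𝕂 𝔸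
  rw [← exp_nsmul, ← Nat.cast_smul_eq_nsmul 𝕂, smul_smul, mul_inv_cancel₀ (by exact_mod_cast hN),
    one_smul]

theorem exp_inv_natCast_smul_pow_pred {N : ℕ} (hN : N ≠ 0) (X : 𝔸) :
    exp ((N : 𝕂)⁻¹ • X) ^ (N - 1) = exp X * exp (-(N : 𝕂)⁻¹ • X) := by
  let := NormedAlgebra.restrictScalars ℚ 𝕂 𝔸
  let := invertibleExp ((N : 𝕂)⁻¹ • X)
  obtain ⟨k, rfl⟩ := Nat.exists_eq_succ_of_ne_zero hN
  rw [← exp_inv_natCast_smul_pow (𝕂 := 𝕂) hN X, neg_smul, ← invOf_exp, pow_succ, mul_assoc,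
    mul_invOf_self, mul_one, Nat.succ_sub_one]

/-- Write `exp X = exp (X / N) ^ N` and differentiate the power: under `φ` the `N` factors of the
Leibniz rule can be cycled into one, and as `N → ∞` the derivative of `exp` at `A / N` tends to the
identity. -/
theorem map_fderiv_exp_apply (φ : 𝔸 →L[𝕂] 𝕂) {A : 𝔸} (hA : A ∈ traceCentralizer φ) (D : 𝔸) :
    φ (fderiv 𝕂 exp A D) = φ (exp A * D) := by
  let := NormedAlgebra.restrictScalars ℚ 𝕂 𝔸
  set E := fderiv 𝕂 (exp : 𝔸 → 𝔸)
  have hE (X : 𝔸) : HasFDerivAt exp (E X) X := (exp_analytic X).differentiableAt.hasFDerivAt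
  have hscaled (N : ℕ) (hN : N ≠ 0) :
      φ (E A D) = φ (exp A * (exp (-(N : 𝕂)⁻¹ • A) * E ((N : 𝕂)⁻¹ • A) D)) := by
    set c : 𝕂 := (N : 𝕂)⁻¹
    have hpow := ((hE (c • A)).comp A ((hasFDerivAt_id (𝕜 := 𝕂) A).const_smul c)).fun_pow' N
    simp only [Function.comp_apply] at hpow
    rw [show (fun X : 𝔸 => exp (c • X) ^ N) = exp from funext (exp_inv_natCast_smul_pow hN)]
      at hpow
    rw [(hE A).unique hpow]
    have hc : exp (c • A) ∈ traceCentralizer φ :=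
      exp_mem_traceCentralizer (Subalgebra.smul_mem _ hA c)
    simp only [sum_apply, map_sum, smul_apply, ContinuousLinearMap.comp_apply,
      MulOpposite.smul_eq_mul_unop, MulOpposite.unop_op, ContinuousLinearMap.id_apply, map_smul,
      smul_eq_mul, Algebra.mul_smul_comm, Algebra.smul_mul_assoc]
    have hterm (x : ℕ) (hx : x ∈ Finset.range N) :
        φ (exp (c • A) ^ (N.pred - x) * E (c • A) D * exp (c • A) ^ x) =
          φ (exp (c • A) ^ (N - 1) * E (c • A) D) := by
      rw [map_pow_mul_mul_pow_eq hc, Nat.pred_eq_sub_one, Nat.sub_add_cancel (by grind)]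
    rw [← Finset.mul_sum, Finset.sum_congr rfl hterm, Finset.sum_const, Finset.card_range,
      nsmul_eq_mul, ← mul_assoc, inv_mul_cancel₀ (by exact_mod_cast hN), one_mul,
      exp_inv_natCast_smul_pow_pred hN, mul_assoc]
  have hlim : Tendsto (fun N : ℕ => φ (exp A * (exp (-(N : 𝕂)⁻¹ • A) * E ((N : 𝕂)⁻¹ • A) D)))
      atTop (𝓝 (φ (exp A * D))) := by
    have hE_cont : Continuous E :=
      (AnalyticOnNhd.contDiff (n := 1) fun X _ => exp_analytic X).continuous_fderiv one_ne_zero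
    have hcont : Continuous fun c : 𝕂 => φ (exp A * (exp (-c • A) * E (c • A) D)) := by
      fun_prop
    have := (hcont.tendsto 0).comp tendsto_inv_atTop_nhds_zero_nat
    simpa [Function.comp_def, hasFDerivAt_exp_zero.fderiv, E] using this
  exact tendsto_nhds_unique
    (tendsto_const_nhds.congr' (eventually_ne_atTop 0 |>.mono hscaled)) hlim

theorem map_deriv_eq_map_deriv_mul_exp_neg [NormedSpace ℝ 𝔸] [IsScalarTower ℝ 𝕂 𝔸]
    {φ : 𝔸 →L[𝕂] 𝕂} {L β : ℝ → 𝔸} {D β' : 𝔸} (hL : HasDerivAt L D 0) (hβ : HasDerivAt β β' 0)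
    (hLβ : ∀ᶠ t in 𝓝 0, exp (L t) = β t) (hc : L 0 ∈ traceCentralizer φ) :
    φ D = φ (β' * exp (-L 0)) := by
  set A := L 0
  have hE : HasDerivAt (fun t => exp (L t)) (fderiv 𝕂 exp A D) 0 :=
    ((exp_analytic A).differentiableAt.hasFDerivAt.restrictScalars ℝ).comp_hasDerivAt 0 hL
  rw [← hE.unique (hβ.congr_of_eventuallyEq hLβ)]
  let := NormedAlgebra.restrictScalars ℚ 𝕂 𝔸
  set ψ := φ.comp ((ContinuousLinearMap.mul 𝕂 𝔸).flip (exp (-A)))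
  have hψ : A ∈ traceCentralizer ψ := fun Y => by
    simp only [ψ, ContinuousLinearMap.comp_apply, ContinuousLinearMap.flip_apply,
      ContinuousLinearMap.mul_apply']
    rw [mul_assoc, hc, mul_assoc, mul_assoc, ((Commute.refl A).neg_right.exp_right).eq]
  have key := map_fderiv_exp_apply ψ hψ D
  simp only [ψ, ContinuousLinearMap.comp_apply, ContinuousLinearMap.flip_apply,
      ContinuousLinearMap.mul_apply'] at key
  let := invertibleExp A
  rw [key, ← exp_mem_traceCentralizer (neg_mem hc), ← mul_assoc, ← invOf_exp, invOf_mul_self,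
    one_mul]

theorem hasDerivAt_exp_smul_mul_mul_exp_smul (X Y : 𝔸) :
    HasDerivAt (fun t : 𝕂 => exp (t • X) * Y * exp (t • X)) (X * Y + Y * X) 0 := by
  have h := hasDerivAt_exp_smul_const (𝕂 := 𝕂) X 0
  simpa using (h.mul_const Y).fun_mul h

theorem map_mul_exp_add_exp_mul_mul_exp_neg {φ : 𝔸 →L[𝕂] 𝕂} {A : 𝔸}
    (hA : A ∈ traceCentralizer φ) (X : 𝔸) :
    φ ((X * exp A + exp A * X) * exp (-A)) = 2 * φ X := by
  let := NormedAlgebra.restrictScalars ℚ 𝕂 𝔸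
  let := invertibleExp A
  rw [← invOf_exp, add_mul, map_add, mul_assoc, mul_invOf_self, mul_one, mul_assoc,
    exp_mem_traceCentralizer hA, mul_assoc, invOf_mul_self, mul_one, two_mul]

end TraceCentralizer

section Matrix

variable {m : Type*} [Fintype m] [DecidableEq m]

/-- The `L∞` operator norm, with its uniformity replaced by the entrywise one, so that its
topology is syntactically the one in which `NormedSpace.exp` of a matrix is formed. -/
noncomputable abbrev Matrix.linftyOpNormedRing' : NormedRing (Matrix m m ℂ) :=
  { Matrix.linftyOpNormedRing with
    toMetricSpace := (Matrix.linftyOpNormedRing (α := ℂ) (n := m)).toMetricSpace.replaceUniformity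
      (U := Matrix.instUniformSpace m m ℂ) rfl }

attribute [local instance] Matrix.linftyOpNormedRing'

noncomputable abbrev Matrix.linftyOpNormedAlgebra' : NormedAlgebra ℂ (Matrix m m ℂ) :=
  { Matrix.instAlgebra with
    norm_smul_le := (Matrix.linftyOpNormedAlgebra (R := ℂ) (α := ℂ) (n := m)).norm_smul_le }

attribute [local instance] Matrix.linftyOpNormedAlgebra'

theorem Matrix.hasDerivAt_of_entries {M : ℝ → Matrix m m ℂ} {t₀ : ℝ}
    (h : ∀ i j, DifferentiableAt ℝ (fun t => M t i j) t₀) :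
    HasDerivAt M (Matrix.of fun i j => deriv (fun t => M t i j) t₀) t₀ := by
  rw [hasDerivAt_iff_tendsto_slope]
  exact tendsto_pi_nhds.mpr fun i => tendsto_pi_nhds.mpr fun j =>
    hasDerivAt_iff_tendsto_slope.mp (h i j).hasDerivAt

noncomputable def Matrix.traceMulLeft (P : Matrix m m ℂ) : Matrix m m ℂ →L[ℂ] ℂ :=
  LinearMap.toContinuousLinearMap (Matrix.traceLinearMap m ℂ ℂ ∘ₗ LinearMap.mulLeft ℂ P)

@[simp]
theorem Matrix.traceMulLeft_apply (P X : Matrix m m ℂ) : traceMulLeft P X = trace (P * X) := rfl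

theorem Matrix.mem_traceCentralizer_traceMulLeft {P A : Matrix m m ℂ} (h : Commute P A) :
    A ∈ traceCentralizer (traceMulLeft P) := fun Y => by
  rw [traceMulLeft_apply, traceMulLeft_apply, ← mul_assoc, h.eq, mul_assoc, trace_mul_comm,
    mul_assoc]

end Matrix

attribute [local instance] Matrix.linftyOpNormedRing' Matrix.linftyOpNormedAlgebra'

theorem stmt12_general
    (n : ℕ) (ξ η : Matrix (Fin n) (Fin n) ℂ)
    (β : ℝ → Matrix (Fin n) (Fin n) ℂ)
    (hβ : ∀ t : ℝ, β t =
      NormedSpace.exp ((-(t : ℂ) * Complex.I) • ξ) *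
        NormedSpace.exp (((2 : ℂ) * Complex.I) • η) *
        NormedSpace.exp ((-(t : ℂ) * Complex.I) • ξ))
    (L : ℝ → Matrix (Fin n) (Fin n) ℂ)
    (hL : ∀ᶠ t in nhds (0 : ℝ), NormedSpace.exp (L t) = β t)
    (hL0 : L 0 = ((2 : ℂ) * Complex.I) • η)
    (hLsmooth : ∀ i j : Fin n, ContDiffAt ℝ ⊤ (fun t : ℝ => L t i j) 0) :
    HasDerivAt (fun t : ℝ => (-(1 : ℂ) / 8) * Matrix.trace (L t * L t))
      (Matrix.trace ((Complex.I • ξ) * (Complex.I • η))) 0 := by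
  set A := ((2 : ℂ) * Complex.I) • η
  set X := (-Complex.I) • ξ
  have hL' := Matrix.hasDerivAt_of_entries fun i j => (hLsmooth i j).differentiableAt (by simp)
  set D := Matrix.of fun i j => deriv (fun t => L t i j) 0
  have hβ' : HasDerivAt β (X * exp A + exp A * X) 0 := by
    rw [show β = fun t : ℝ => exp (t • X) * exp A * exp (t • X) from funext fun t => by
      rw [hβ, ← Complex.coe_smul, smul_smul, neg_mul_comm, mul_comm]]
    exact hasDerivAt_exp_smul_mul_mul_exp_smul X (exp A)
  have hA : A ∈ traceCentralizer (Matrix.traceMulLeft η) :=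
    Matrix.mem_traceCentralizer_traceMulLeft ((Commute.refl η).smul_right _)
  have htrace : Matrix.trace (η * D) = 2 * Matrix.trace (η * X) := by
    have h := map_deriv_eq_map_deriv_mul_exp_neg hL' hβ' hL (hL0 ▸ hA)
    rwa [hL0, map_mul_exp_add_exp_mul_mul_exp_neg hA, Matrix.traceMulLeft_apply,
      Matrix.traceMulLeft_apply] at h
  have hLL : HasDerivAt (fun t => Matrix.trace (L t * L t)) (Matrix.trace (D * A + A * D)) 0 := by
    simpa [hL0, Function.comp_def] using
      ((Matrix.traceMulLeft 1).restrictScalars ℝ).hasFDerivAt.comp_hasDerivAt 0 (hL'.fun_mul hL')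
  refine (hLL.const_mul (-(1 : ℂ) / 8)).congr_deriv ?_
  rw [Matrix.trace_add, Matrix.trace_mul_comm D A]
  simp only [A, X, Matrix.smul_mul, Matrix.mul_smul, Matrix.trace_smul, smul_eq_mul] at htrace ⊢
  rw [htrace, Matrix.trace_mul_comm ξ η]
  ring

/-- For `ξ, η ∈ 𝔲(n)` (skew-Hermitian), let
`β(t) = exp(−itξ)·exp(2iη)·exp(−itξ)` and let `L(t) = log β(t)` be given by the power
series near `0` (encoded: `exp(L t) = β t` near `0` and `L 0 = 2iη`, `L` smooth).
Then `(d/dt)|₀ [−(1/8) tr((log β t)²)] = B(ξ,η) = tr(iξ·iη)`, i.e. the moment map of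
the right `U(n)`-action associated with `ρ(u exp(iη)) = ½B(η,η)` satisfies
`μ^ξ(u·exp(iη)) = B(ξ,η)`. -/
theorem stmt12
    (n : ℕ) (ξ η : Matrix (Fin n) (Fin n) ℂ)
    (hξ : ξ.conjTranspose = -ξ) (hη : η.conjTranspose = -η)
    (β : ℝ → Matrix (Fin n) (Fin n) ℂ)
    (hβ : ∀ t : ℝ, β t =
      NormedSpace.exp ((-(t : ℂ) * Complex.I) • ξ) *
        NormedSpace.exp (((2 : ℂ) * Complex.I) • η) *
        NormedSpace.exp ((-(t : ℂ) * Complex.I) • ξ))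
    (L : ℝ → Matrix (Fin n) (Fin n) ℂ)
    (hL : ∀ᶠ t in nhds (0 : ℝ), NormedSpace.exp (L t) = β t)
    (hL0 : L 0 = ((2 : ℂ) * Complex.I) • η)
    (hLsmooth : ∀ i j : Fin n, ContDiffAt ℝ ⊤ (fun t : ℝ => L t i j) 0) :
    HasDerivAt (fun t : ℝ => (-(1 : ℂ) / 8) * Matrix.trace (L t * L t))
      (Matrix.trace ((Complex.I • ξ) * (Complex.I • η))) 0 :=
  stmt12_general n ξ η β hβ L hL hL0 hLsmooth
end
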